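/- arXiv:2009.04795 — 2 statements merged into one kernel-verified Lean document; each statement's English description precedes it below -/
import Mathlib

section
/- The function θ₀ ↦ ∏_{i=1}^n [Φ(θ_{y_i}(θ₀) − μ_i) − Φ(θ_{y_i−1}(θ₀) − μ_i)], where θ_{−1}(θ₀) = −∞, θ₁(θ₀) = +∞, and the factor is Φ(θ₀ − μ_i) if y_i = 0 and 1 − Φ(θ₀ − μ_i) if y_i = 1, is Lebesgue integrable over θ₀ ∈ ℝ provided there exist indices i ≠ i' with y_i = 1 and y_{i'} = 0. -/
open MeasureTheory

/-- Standard normal cumulative distribution function. -/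
noncomputable def stdNormCDF (x : ℝ) : ℝ :=
  ∫ t in Set.Iic x, (Real.sqrt (2 * Real.pi))⁻¹ * Real.exp (-t ^ 2 / 2)

namespace StdNormAux

noncomputable def phi (t : ℝ) : ℝ := (Real.sqrt (2 * Real.pi))⁻¹ * Real.exp (-t ^ 2 / 2)

lemma phi_nonneg (t : ℝ) : 0 ≤ phi t := by unfold phi; positivity

lemma phi_integrable : Integrable phi := by
  have h := integrable_exp_neg_mul_sq (by norm_num : (0:ℝ) < 1/2)
  have he : (fun t : ℝ => Real.exp (-(1/2) * t ^ 2)) = fun t => Real.exp (-t ^ 2 / 2) := by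
    funext t; ring_nf
  rw [he] at h
  exact h.const_mul _

lemma phi_total : ∫ t : ℝ, phi t = 1 := by
  have h := integral_gaussian (1/2 : ℝ)
  have he : (fun t : ℝ => Real.exp (-(1/2) * t ^ 2)) = fun t => Real.exp (-t ^ 2 / 2) := by
    funext t; ring_nf
  rw [he] at h
  have hpi : Real.sqrt (Real.pi / (1/2)) = Real.sqrt (2 * Real.pi) := by norm_num [mul_comm]
  unfold phi
  rw [MeasureTheory.integral_const_mul, h, hpi, inv_mul_cancel₀]
  positivity

lemma cdf_nonneg (x : ℝ) : 0 ≤ stdNormCDF x :=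
  setIntegral_nonneg measurableSet_Iic fun t _ => phi_nonneg t

lemma cdf_le_one (x : ℝ) : stdNormCDF x ≤ 1 := by
  rw [← phi_total]
  exact setIntegral_le_integral phi_integrable (Filter.Eventually.of_forall phi_nonneg)

lemma one_sub_cdf_nonneg (x : ℝ) : 0 ≤ 1 - stdNormCDF x := by
  linarith [cdf_le_one x]

noncomputable def C : ℝ := (Real.sqrt (2 * Real.pi))⁻¹ * Real.exp (1/2 : ℝ)

lemma C_nonneg : 0 ≤ C := by unfold C; positivity

lemma phi_le_exp (t : ℝ) : phi t ≤ C * Real.exp t := by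
  unfold phi C
  rw [mul_assoc, ← Real.exp_add]
  have : -t ^ 2 / 2 ≤ 1/2 + t := by nlinarith [sq_nonneg (t + 1)]
  have := Real.exp_le_exp.mpr this
  have hc : (0:ℝ) ≤ (Real.sqrt (2 * Real.pi))⁻¹ := by positivity
  exact mul_le_mul_of_nonneg_left this hc

lemma phi_le_exp_neg (t : ℝ) : phi t ≤ C * Real.exp (-t) := by
  unfold phi C
  rw [mul_assoc, ← Real.exp_add]
  have : -t ^ 2 / 2 ≤ 1/2 + -t := by nlinarith [sq_nonneg (t - 1)]
  have := Real.exp_le_exp.mpr this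
  have hc : (0:ℝ) ≤ (Real.sqrt (2 * Real.pi))⁻¹ := by positivity
  exact mul_le_mul_of_nonneg_left this hc

lemma cdf_le (x : ℝ) : stdNormCDF x ≤ C * Real.exp x := by
  have h1 : stdNormCDF x ≤ ∫ t in Set.Iic x, C * Real.exp t := by
    apply setIntegral_mono_on phi_integrable.integrableOn
      ((integrableOn_exp_Iic x).const_mul C) measurableSet_Iic
    exact fun t _ => phi_le_exp t
  calc stdNormCDF x ≤ ∫ t in Set.Iic x, C * Real.exp t := h1
    _ = C * Real.exp x := by rw [MeasureTheory.integral_const_mul, integral_exp_Iic]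

lemma one_sub_cdf_le (x : ℝ) : 1 - stdNormCDF x ≤ C * Real.exp (-x) := by
  have hsplit : stdNormCDF x + ∫ t in Set.Ioi x, phi t = 1 := by
    have := MeasureTheory.integral_add_compl (measurableSet_Iic (a := x)) phi_integrable
    rw [Set.compl_Iic] at this
    rw [← phi_total]; exact this
  have h1 : (∫ t in Set.Ioi x, phi t) ≤ ∫ t in Set.Ioi x, C * Real.exp (-t) := by
    have hint : IntegrableOn (fun t : ℝ => Real.exp (-t)) (Set.Ioi x) := by
      have := exp_neg_integrableOn_Ioi x (by norm_num : (0:ℝ) < 1)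
      simpa using this
    apply setIntegral_mono_on phi_integrable.integrableOn (hint.const_mul C) measurableSet_Ioi
    exact fun t _ => phi_le_exp_neg t
  have h2 : (∫ t in Set.Ioi x, C * Real.exp (-t)) = C * Real.exp (-x) := by
    rw [MeasureTheory.integral_const_mul, integral_exp_neg_Ioi]
  linarith

lemma cdf_monotone : Monotone stdNormCDF := by
  intro a b hab
  apply setIntegral_mono_set phi_integrable.integrableOn
    (Filter.Eventually.of_forall phi_nonneg)
  exact Filter.Eventually.of_forall (Set.Iic_subset_Iic.mpr hab)

lemma cdf_measurable : Measurable stdNormCDF := cdf_monotone.measurable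

end StdNormAux

/-- The likelihood of the threshold `θ₀`, i.e. the product over observations of
`Φ(θ₀ − μᵢ)` if `yᵢ = 0` and `1 − Φ(θ₀ − μᵢ)` if `yᵢ = 1`, is Lebesgue integrable
over `θ₀ ∈ ℝ` provided the sample contains both a `0` and a `1` response. -/
theorem stmt_10 (n : ℕ) (y : Fin n → ℕ) (hy : ∀ i, y i = 0 ∨ y i = 1)
    (μ : Fin n → ℝ) (i i' : Fin n) (hii : i ≠ i') (h1 : y i = 1) (h0 : y i' = 0) :
    Integrable (fun θ₀ : ℝ =>
      ∏ k : Fin n,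
        (if y k = 0 then stdNormCDF (θ₀ - μ k) else 1 - stdNormCDF (θ₀ - μ k))) := by
  classical
  open StdNormAux in
  set f : ℝ → ℝ := fun θ₀ =>
    ∏ k : Fin n, (if y k = 0 then stdNormCDF (θ₀ - μ k) else 1 - stdNormCDF (θ₀ - μ k))
    with hf
  set g : ℝ → ℝ := fun θ₀ =>
    min (StdNormAux.C * Real.exp (θ₀ - μ i')) (StdNormAux.C * Real.exp (-(θ₀ - μ i)))
    with hg
  -- factor bounds
  have hfac0 : ∀ (k : Fin n) (θ : ℝ),
      0 ≤ (if y k = 0 then stdNormCDF (θ - μ k) else 1 - stdNormCDF (θ - μ k)) := by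
    intro k θ
    by_cases h : y k = 0
    · simp only [if_pos h]; exact StdNormAux.cdf_nonneg _
    · simp only [if_neg h]; exact StdNormAux.one_sub_cdf_nonneg _
  have hfac1 : ∀ (k : Fin n) (θ : ℝ),
      (if y k = 0 then stdNormCDF (θ - μ k) else 1 - stdNormCDF (θ - μ k)) ≤ 1 := by
    intro k θ
    by_cases h : y k = 0
    · simp only [if_pos h]; exact StdNormAux.cdf_le_one _
    · simp only [if_neg h]; linarith [StdNormAux.cdf_nonneg (θ - μ k)]
  have hf_nonneg : ∀ θ, 0 ≤ f θ := fun θ =>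
    Finset.prod_nonneg fun k _ => hfac0 k θ
  have hf_le : ∀ (j : Fin n) (θ : ℝ),
      f θ ≤ (if y j = 0 then stdNormCDF (θ - μ j) else 1 - stdNormCDF (θ - μ j)) := by
    intro j θ
    have hfθ : f θ = ∏ k : Fin n,
        (if y k = 0 then stdNormCDF (θ - μ k) else 1 - stdNormCDF (θ - μ k)) := rfl
    rw [hfθ, ← Finset.mul_prod_erase Finset.univ _ (Finset.mem_univ j)]
    have hp1 : (∏ k ∈ Finset.univ.erase j,
        (if y k = 0 then stdNormCDF (θ - μ k) else 1 - stdNormCDF (θ - μ k))) ≤ 1 :=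
      Finset.prod_le_one (fun k _ => hfac0 k θ) (fun k _ => hfac1 k θ)
    exact mul_le_of_le_one_right (hfac0 j θ) hp1
  have hbound : ∀ θ, ‖f θ‖ ≤ g θ := by
    intro θ
    rw [Real.norm_eq_abs, abs_of_nonneg (hf_nonneg θ)]
    apply le_min
    · have := hf_le i' θ
      rw [h0] at this; simp only [if_pos rfl] at this
      exact this.trans (StdNormAux.cdf_le _)
    · have := hf_le i θ
      rw [h1] at this; simp only [if_neg (by norm_num : (1:ℕ) ≠ 0)] at this
      exact this.trans (StdNormAux.one_sub_cdf_le _)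
  -- measurability of f
  have hmeas : AEStronglyMeasurable f volume := by
    apply Measurable.aestronglyMeasurable
    apply Finset.measurable_prod
    intro k _
    by_cases h : y k = 0
    · simp only [h, if_pos rfl]
      exact StdNormAux.cdf_measurable.comp (measurable_id.sub measurable_const)
    · simp only [h, if_neg h]
      exact measurable_const.sub
        (StdNormAux.cdf_measurable.comp (measurable_id.sub measurable_const))
  -- integrability of g
  have hg_int : Integrable g := by
    rw [← MeasureTheory.integrableOn_univ, ← Set.Iic_union_Ioi (a := (0:ℝ))]
    apply MeasureTheory.IntegrableOn.union
    · have h1 : IntegrableOn (fun θ : ℝ => StdNormAux.C * Real.exp (θ - μ i'))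
          (Set.Iic 0) := by
        have : (fun θ : ℝ => StdNormAux.C * Real.exp (θ - μ i')) =
            fun θ : ℝ => (StdNormAux.C * Real.exp (-μ i')) * Real.exp θ := by
          funext θ; rw [Real.exp_sub, Real.exp_neg]; ring
        rw [this]
        exact (integrableOn_exp_Iic 0).const_mul _
      apply h1.mono' ((continuous_const.mul ((Real.continuous_exp.comp (continuous_id.sub continuous_const)))).min (continuous_const.mul (Real.continuous_exp.comp ((continuous_id.sub continuous_const).neg)))).aestronglyMeasurable.restrict
      apply Filter.Eventually.of_forall
      intro θ
      rw [Real.norm_eq_abs, abs_of_nonneg]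
      · exact min_le_left _ _
      · exact le_min (mul_nonneg StdNormAux.C_nonneg (Real.exp_pos _).le)
          (mul_nonneg StdNormAux.C_nonneg (Real.exp_pos _).le)
    · have h2 : IntegrableOn (fun θ : ℝ => StdNormAux.C * Real.exp (-(θ - μ i)))
          (Set.Ioi 0) := by
        have : (fun θ : ℝ => StdNormAux.C * Real.exp (-(θ - μ i))) =
            fun θ : ℝ => (StdNormAux.C * Real.exp (μ i)) * Real.exp (-(1:ℝ) * θ) := by
          funext θ; rw [neg_sub, Real.exp_sub, neg_one_mul, Real.exp_neg]; ring
        rw [this]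
        exact (exp_neg_integrableOn_Ioi 0 (by norm_num : (0:ℝ) < 1)).const_mul _
      apply h2.mono' ((continuous_const.mul ((Real.continuous_exp.comp (continuous_id.sub continuous_const)))).min (continuous_const.mul (Real.continuous_exp.comp ((continuous_id.sub continuous_const).neg)))).aestronglyMeasurable.restrict
      apply Filter.Eventually.of_forall
      intro θ
      rw [Real.norm_eq_abs, abs_of_nonneg]
      · exact min_le_right _ _
      · exact le_min (mul_nonneg StdNormAux.C_nonneg (Real.exp_pos _).le)
          (mul_nonneg StdNormAux.C_nonneg (Real.exp_pos _).le)
  exact hg_int.mono' hmeas (Filter.Eventually.of_forall hbound)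
end

section
/- Let (X₁,...,X_q) have density factorizing as ∏_j f_j(x_j | x_{pa(j)}) according to DAG D, and let s ≠ 1 with 1 ∉ pa(s). Then the post-intervention marginal density of X₁ satisfies f(x₁ | do(X_s = x̃)) = ∫ f(x₁ | x_s = x̃, x_{pa(s)}) f(x_{pa(s)}) dx_{pa(s)}, where f(x₁ | x_s, x_{pa(s)}) is the observational conditional density of X₁ given (X_s, X_{pa(s)}) and f(x_{pa(s)}) is the observational marginal of X_{pa(s)}. -/
open MeasureTheory
open scoped ENNReal

/-- The joint density `∏ j, f j (y j | y)` evaluated on the vector that agrees with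
`y` on `A` and with `w` elsewhere, integrated over `w`: the marginal density of the
coordinates in `A`. -/
noncomputable def margDensity (q : ℕ) (f : Fin q → ℝ → (Fin q → ℝ) → ℝ)
    (A : Finset (Fin q)) (y : Fin q → ℝ) : ℝ :=
  ∫ w : {i : Fin q // i ∉ A} → ℝ,
    ∏ j : Fin q,
      f j ((fun i => if h : i ∈ A then y i else w ⟨i, h⟩) j)
        (fun i => if h : i ∈ A then y i else w ⟨i, h⟩)

namespace BackdoorAux
variable {q : ℕ}
def glue (A : Finset (Fin q)) (y : Fin q → ℝ) (w : {i : Fin q // i ∉ A} → ℝ) :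
    Fin q → ℝ :=
  fun i => if h : i ∈ A then y i else w ⟨i, h⟩
lemma measurable_glue (A : Finset (Fin q)) (y : Fin q → ℝ) :
    Measurable (glue A y) := by
  apply measurable_pi_lambda
  intro i
  by_cases h : i ∈ A
  · simp only [glue, h, dif_pos]; exact measurable_const
  · simpa [glue, h] using measurable_pi_apply (⟨i, h⟩ : {i : Fin q // i ∉ A})
lemma lintegral_reindex {ι ι' : Type*} [Fintype ι] [Fintype ι'] (e : ι ≃ ι')
    (G : (ι → ℝ) → ℝ≥0∞) (hG : Measurable G) :
    ∫⁻ v : ι' → ℝ, G (fun i => v (e i)) = ∫⁻ w : ι → ℝ, G w := by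
  have hmp := MeasureTheory.measurePreserving_piCongrLeft
      (fun _ : ι' => (volume : Measure ℝ)) e
  have hkey : ∀ v : ι → ℝ,
      G (fun i => (MeasurableEquiv.piCongrLeft (fun _ : ι' => ℝ) e) v (e i)) = G v := by
    intro v
    congr 1
    funext i
    exact Equiv.piCongrLeft_apply_apply (fun _ : ι' => ℝ) e v i
  have hG' : Measurable fun v : ι' → ℝ => G (fun i => v (e i)) := by
    apply hG.comp
    exact measurable_pi_lambda _ fun i => measurable_pi_apply (e i)
  calc ∫⁻ v : ι' → ℝ, G (fun i => v (e i))
      = ∫⁻ v : ι' → ℝ, G (fun i => v (e i)) ∂(Measure.pi fun _ => volume) := by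
        rw [← volume_pi]
    _ = ∫⁻ w : ι → ℝ, G (fun i => (MeasurableEquiv.piCongrLeft (fun _ : ι' => ℝ) e) w (e i))
          ∂(Measure.pi fun _ => volume) := (hmp.lintegral_comp hG').symm
    _ = ∫⁻ w : ι → ℝ, G w := by
        rw [← volume_pi]
        exact lintegral_congr fun v => hkey v

/-- Split a glued pi-lintegral over the complement of `A` into an outer integral
over the coordinates in `B` and an inner one over the complement of `C = A ∪ B`. -/
lemma split (A B C : Finset (Fin q)) (hd : ∀ i ∈ B, i ∉ A) (hC : C = A ∪ B)
    (F : (Fin q → ℝ) → ℝ≥0∞) (hF : Measurable F) (y : Fin q → ℝ) :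
    ∫⁻ w : {i : Fin q // i ∉ A} → ℝ, F (glue A y w)
      = ∫⁻ a : {i : Fin q // i ∈ B} → ℝ,
          ∫⁻ b : {i : Fin q // i ∉ C} → ℝ,
            F (glue C (fun i => if h : i ∈ B then a ⟨i, h⟩ else y i) b) := by
  classical
  set T := {i : Fin q // i ∉ A}
  set p : T → Prop := fun t => (t : Fin q) ∈ B with hp
  have e1 := MeasurableEquiv.piEquivPiSubtypeProd (fun _ : T => ℝ) p
  have hmp := MeasureTheory.measurePreserving_piEquivPiSubtypeProd
      (fun _ : T => (volume : Measure ℝ)) p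
  set G : (T → ℝ) → ℝ≥0∞ := fun w => F (glue A y w) with hGdef
  have hGmeas : Measurable G := hF.comp (measurable_glue A y)
  -- step 1: to the product space
  have h1 : ∫⁻ w : T → ℝ, G w
      = ∫⁻ x : ({t : T // p t} → ℝ) × ({t : T // ¬ p t} → ℝ),
          G ((MeasurableEquiv.piEquivPiSubtypeProd (fun _ : T => ℝ) p).symm x)
          ∂((Measure.pi fun _ => volume).prod (Measure.pi fun _ => volume)) := by
    have hmp' := (MeasureTheory.measurePreserving_piEquivPiSubtypeProd
      (fun _ : T => (volume : Measure ℝ)) p).symm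
        (MeasurableEquiv.piEquivPiSubtypeProd (fun _ : T => ℝ) p)
    rw [volume_pi]
    exact (hmp'.lintegral_comp hGmeas).symm
  have hGsm : Measurable fun x : ({t : T // p t} → ℝ) × ({t : T // ¬ p t} → ℝ) =>
      G ((MeasurableEquiv.piEquivPiSubtypeProd (fun _ : T => ℝ) p).symm x) :=
    hGmeas.comp (MeasurableEquiv.measurable _)
  have h2 : ∫⁻ x : ({t : T // p t} → ℝ) × ({t : T // ¬ p t} → ℝ),
      G ((MeasurableEquiv.piEquivPiSubtypeProd (fun _ : T => ℝ) p).symm x)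
      ∂((Measure.pi fun _ => volume).prod (Measure.pi fun _ => volume))
      = ∫⁻ a' : {t : T // p t} → ℝ, ∫⁻ b' : {t : T // ¬ p t} → ℝ,
          G ((MeasurableEquiv.piEquivPiSubtypeProd (fun _ : T => ℝ) p).symm (a', b'))
          ∂(Measure.pi fun _ => volume) ∂(Measure.pi fun _ => volume) :=
    MeasureTheory.lintegral_prod _ hGsm.aemeasurable
  -- equivalences of index types
  let eB : {t : T // p t} ≃ {i : Fin q // i ∈ B} :=
    { toFun := fun t => ⟨(t : T), t.2⟩
      invFun := fun i => ⟨⟨(i : Fin q), hd _ i.2⟩, i.2⟩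
      left_inv := fun t => by ext; rfl
      right_inv := fun i => by ext; rfl }
  let eC : {t : T // ¬ p t} ≃ {i : Fin q // i ∉ C} :=
    { toFun := fun t => ⟨(t : T), by
        have h1 : (t : T).1 ∉ A := (t : T).2
        have h2 : (t : T).1 ∉ B := t.2
        simp [hC, h1, h2]⟩
      invFun := fun i => ⟨⟨(i : Fin q), fun hA => i.2 (by simp [hC, hA])⟩,
        fun hB => i.2 (by simp only [hC, Finset.mem_union]; exact Or.inr hB)⟩
      left_inv := fun t => by ext; rfl
      right_inv := fun i => by ext; rfl }
  set Φ : ({t : T // p t} → ℝ) → ℝ≥0∞ := fun a' =>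
    ∫⁻ b' : {t : T // ¬ p t} → ℝ,
      G ((MeasurableEquiv.piEquivPiSubtypeProd (fun _ : T => ℝ) p).symm (a', b')) with hPhi
  have hPhiMeas : Measurable Φ := hGsm.lintegral_prod_right'
  have h3 : ∫⁻ w : T → ℝ, G w = ∫⁻ a' : {t : T // p t} → ℝ, Φ a' := by
    rw [h1, h2]
    rw [← volume_pi]
    apply lintegral_congr
    intro a'
    rw [hPhi, ← volume_pi]
  have h4 : ∫⁻ a' : {t : T // p t} → ℝ, Φ a'
      = ∫⁻ a : {i : Fin q // i ∈ B} → ℝ, Φ (fun t => a (eB t)) :=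
    (lintegral_reindex eB Φ hPhiMeas).symm
  rw [h3, h4]
  apply lintegral_congr
  intro a
  have h5 : Φ (fun t => a (eB t))
      = ∫⁻ b : {i : Fin q // i ∉ C} → ℝ,
          G ((MeasurableEquiv.piEquivPiSubtypeProd (fun _ : T => ℝ) p).symm
            ((fun t => a (eB t)), (fun t => b (eC t)))) := by
    rw [hPhi]
    exact (lintegral_reindex eC _ (hGsm.comp (measurable_prodMk_left))).symm
  rw [h5]
  apply lintegral_congr
  intro b
  show F _ = F _
  congr 1
  funext i
  by_cases hA : i ∈ A
  · have hB : i ∉ B := fun h => hd i h hA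
    have hCmem : i ∈ C := by simp [hC, hA]
    simp [glue, hA, hCmem, hB]
  · rw [MeasurableEquiv.piEquivPiSubtypeProd_symm_apply]
    by_cases hB : i ∈ B
    · have hCmem : i ∈ C := by simp [hC, hB]
      simp only [glue, hp]
      rw [dif_neg hA, dif_pos hB, dif_pos hCmem, dif_pos hB]
      exact congrArg a (Subtype.ext rfl)
    · have hCmem : i ∉ C := by simp [hC, hA, hB]
      simp only [glue, hp]
      rw [dif_neg hA, dif_neg hB, dif_neg hCmem]
      exact congrArg b (Subtype.ext rfl)

section WithF
variable (f : Fin q → ℝ → (Fin q → ℝ) → ℝ) (pa : Fin q → Finset (Fin q))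

/-- joint "density" (as an `ℝ≥0∞`-valued lintegral) of factors in `S`, with the
coordinates in `A` fixed to `y` and the rest integrated out. -/
noncomputable def J (S A : Finset (Fin q)) (y : Fin q → ℝ) : ℝ≥0∞ :=
  ∫⁻ w : {i : Fin q // i ∉ A} → ℝ,
    ENNReal.ofReal (∏ j ∈ S, f j (glue A y w j) (glue A y w))

lemma measurable_Freal (hmeas : ∀ j, Measurable (fun p : ℝ × (Fin q → ℝ) => f j p.1 p.2))
    (S : Finset (Fin q)) :
    Measurable (fun v : Fin q → ℝ => ∏ j ∈ S, f j (v j) v) := by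
  apply Finset.measurable_prod
  intro j _
  show Measurable fun v : Fin q → ℝ => f j (v j) v
  have : Measurable fun v : Fin q → ℝ => ((v j, v) : ℝ × (Fin q → ℝ)) :=
    (measurable_pi_apply j).prodMk measurable_id
  exact (hmeas j).comp this

lemma measurable_F (hmeas : ∀ j, Measurable (fun p : ℝ × (Fin q → ℝ) => f j p.1 p.2))
    (S : Finset (Fin q)) :
    Measurable (fun v : Fin q → ℝ => ENNReal.ofReal (∏ j ∈ S, f j (v j) v)) :=
  ENNReal.measurable_ofReal.comp (measurable_Freal f hmeas S)

lemma J_congr {S S' A A' : Finset (Fin q)} (hS : S = S') (hA : A = A') (y : Fin q → ℝ) :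
    J f S A y = J f S' A' y := by subst hS; subst hA; rfl

lemma J_congr_y (hdep : ∀ j t x x', (∀ i ∈ pa j, x i = x' i) → f j t x = f j t x')
    {S A : Finset (Fin q)} {y y' : Fin q → ℝ}
    (h1 : ∀ j ∈ S, j ∈ A → y j = y' j)
    (h2 : ∀ j ∈ S, ∀ i ∈ pa j, i ∈ A → y i = y' i) :
    J f S A y = J f S A y' := by
  unfold J
  apply lintegral_congr
  intro w
  congr 1
  apply Finset.prod_congr rfl
  intro j hj
  have harg : glue A y w j = glue A y' w j := by
    unfold glue
    by_cases hjA : j ∈ A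
    · rw [dif_pos hjA, dif_pos hjA]; exact h1 j hj hjA
    · rw [dif_neg hjA, dif_neg hjA]
  rw [harg]
  apply hdep
  intro i hi
  unfold glue
  by_cases hiA : i ∈ A
  · rw [dif_pos hiA, dif_pos hiA]; exact h2 j hj i hi hiA
  · rw [dif_neg hiA, dif_neg hiA]

lemma lintegral_pi_unique {ι : Type} [inst : Fintype ι] (u : Unique ι)
    (Ψ : (ι → ℝ) → ℝ≥0∞) (hΨ : Measurable Ψ) :
    ∫⁻ a : ι → ℝ, Ψ a = ∫⁻ t : ℝ, Ψ (fun _ => t) := by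
  rw [volume_pi, Subsingleton.elim inst (@Unique.fintype ι u)]
  clear inst
  letI := u
  have hmp := MeasureTheory.measurePreserving_funUnique (volume : Measure ℝ) ι
  have hΨ' : Measurable fun t : ℝ => Ψ (fun _ => t) :=
    hΨ.comp (measurable_pi_lambda _ fun _ => measurable_id)
  have h2 := hmp.lintegral_comp (f := fun t : ℝ => Ψ (fun _ => t)) hΨ'
  rw [← h2]
  apply lintegral_congr
  intro a
  show Ψ a = Ψ (fun _ => a default)
  congr 1
  funext i
  rw [Unique.eq_default i]

/-- peel off a single coordinate `m ∉ A`. -/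
lemma split1 (A : Finset (Fin q)) (m : Fin q) (hm : m ∉ A)
    (F : (Fin q → ℝ) → ℝ≥0∞) (hF : Measurable F) (y : Fin q → ℝ) :
    ∫⁻ w : {i : Fin q // i ∉ A} → ℝ, F (glue A y w)
      = ∫⁻ t : ℝ, ∫⁻ b : {i : Fin q // i ∉ insert m A} → ℝ,
          F (glue (insert m A) (fun i => if i = m then t else y i) b) := by
  classical
  have hC : insert m A = A ∪ {m} := by ext i; simp [or_comm]
  rw [split A {m} (insert m A) (fun i hi => by
      rw [Finset.mem_singleton] at hi; subst hi; exact hm) hC F hF y]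
  have instU : Unique {i : Fin q // i ∈ ({m} : Finset (Fin q))} :=
    { default := ⟨m, Finset.mem_singleton_self m⟩,
      uniq := fun a => Subtype.ext (Finset.mem_singleton.mp a.2) }
  set Φ : ({i : Fin q // i ∈ ({m} : Finset (Fin q))} → ℝ) → ℝ≥0∞ := fun a =>
    ∫⁻ b : {i : Fin q // i ∉ insert m A} → ℝ,
      F (glue (insert m A) (fun i => if h : i ∈ ({m} : Finset (Fin q)) then a ⟨i, h⟩ else y i) b)
    with hPhidef
  have hglue2 : Measurable (fun p : ({i : Fin q // i ∈ ({m} : Finset (Fin q))} → ℝ) ×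
      ({i : Fin q // i ∉ insert m A} → ℝ) =>
      F (glue (insert m A)
        (fun i => if h : i ∈ ({m} : Finset (Fin q)) then p.1 ⟨i, h⟩ else y i) p.2)) := by
    apply hF.comp
    apply measurable_pi_lambda
    intro i
    by_cases hins : i ∈ insert m A
    · by_cases hm' : i ∈ ({m} : Finset (Fin q))
      · simp only [glue, dif_pos hins, dif_pos hm']
        exact (measurable_pi_apply _).comp measurable_fst
      · simp only [glue, dif_pos hins, dif_neg hm']
        exact measurable_const
    · simp only [glue, dif_neg hins]
      exact (measurable_pi_apply _).comp measurable_snd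
  have hPhiMeas : Measurable Φ := Measurable.lintegral_prod_right' hglue2
  rw [lintegral_pi_unique instU Φ hPhiMeas]
  apply lintegral_congr
  intro t
  rw [hPhidef]
  apply lintegral_congr
  intro b
  congr 1
  funext i
  unfold glue
  by_cases hins : i ∈ insert m A
  · rw [dif_pos hins, dif_pos hins]
    by_cases him : i = m
    · subst him; simp
    · simp [him, Finset.mem_singleton]
  · rw [dif_neg hins, dif_neg hins]

lemma lint_f_one (hmeas : ∀ j, Measurable (fun p : ℝ × (Fin q → ℝ) => f j p.1 p.2))
    (hnonneg : ∀ j t x, 0 ≤ f j t x)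
    (hnorm : ∀ j x, ∫ t : ℝ, f j t x = 1)
    (j : Fin q) (x : Fin q → ℝ) :
    ∫⁻ t : ℝ, ENNReal.ofReal (f j t x) = 1 := by
  have hintg : Integrable (fun t => f j t x) := by
    by_contra h
    have := integral_undef h
    rw [hnorm j x] at this
    norm_num at this
  rw [← ofReal_integral_eq_lintegral_ofReal hintg
    (Filter.Eventually.of_forall fun t => hnonneg j t x), hnorm j x, ENNReal.ofReal_one]

lemma elim_step (hmeas : ∀ j, Measurable (fun p : ℝ × (Fin q → ℝ) => f j p.1 p.2))
    (hnonneg : ∀ j t x, 0 ≤ f j t x)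
    (hdep : ∀ j t x x', (∀ i ∈ pa j, x i = x' i) → f j t x = f j t x')
    (hnorm : ∀ j x, ∫ t : ℝ, f j t x = 1)
    {S A : Finset (Fin q)} {m : Fin q} (hmA : m ∉ A) (hmS : m ∈ S)
    (hm_pa : ∀ j ∈ S, m ∉ pa j) (y : Fin q → ℝ) :
    J f S A y = J f (S.erase m) (insert m A) y := by
  classical
  unfold J
  rw [split1 A m hmA _ (measurable_F f hmeas S) y]
  have hjoint : Measurable (fun p : ℝ × ({i : Fin q // i ∉ insert m A} → ℝ) =>
      ENNReal.ofReal (∏ j ∈ S, f j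
        (glue (insert m A) (fun i => if i = m then p.1 else y i) p.2 j)
        (glue (insert m A) (fun i => if i = m then p.1 else y i) p.2))) := by
    apply (measurable_F f hmeas S).comp
    apply measurable_pi_lambda
    intro i
    by_cases hins : i ∈ insert m A
    · by_cases him : i = m
      · subst him; simp only [glue, dif_pos hins, if_pos rfl]; exact measurable_fst
      · simp only [glue, dif_pos hins, if_neg him]; exact measurable_const
    · simp only [glue, dif_neg hins]
      exact (measurable_pi_apply _).comp measurable_snd
  rw [lintegral_lintegral_swap hjoint.aemeasurable]
  apply lintegral_congr
  intro b
  -- the integrand, rewritten: factor `f m` out and make the rest `t`-free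
  have hpt : ∀ t : ℝ,
      ENNReal.ofReal (∏ j ∈ S, f j
        (glue (insert m A) (fun i => if i = m then t else y i) b j)
        (glue (insert m A) (fun i => if i = m then t else y i) b))
      = ENNReal.ofReal (f m t (glue (insert m A) y b)) *
        ENNReal.ofReal (∏ j ∈ S.erase m, f j
          (glue (insert m A) y b j) (glue (insert m A) y b)) := by
    intro t
    rw [← ENNReal.ofReal_mul (hnonneg m t _)]
    congr 1
    rw [← Finset.mul_prod_erase S _ hmS]
    have hagree : ∀ i : Fin q, i ≠ m →
        glue (insert m A) (fun i => if i = m then t else y i) b i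
          = glue (insert m A) y b i := by
      intro i him
      unfold glue
      by_cases hins : i ∈ insert m A
      · simp [hins, him]
      · simp [hins]
    congr 1
    · -- the f m factor
      have h1 : glue (insert m A) (fun i => if i = m then t else y i) b m = t := by
        simp [glue]
      rw [h1]
      apply hdep
      intro i hi
      exact hagree i (fun h => hm_pa m hmS (h ▸ hi))
    · apply Finset.prod_congr rfl
      intro j hj
      have hjm : j ≠ m := (Finset.mem_erase.mp hj).1
      have hjS : j ∈ S := (Finset.mem_erase.mp hj).2
      rw [hagree j hjm]
      apply hdep
      intro i hi
      exact hagree i (fun h => hm_pa j hjS (h ▸ hi))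
  calc ∫⁻ t : ℝ, ENNReal.ofReal (∏ j ∈ S, f j
        (glue (insert m A) (fun i => if i = m then t else y i) b j)
        (glue (insert m A) (fun i => if i = m then t else y i) b))
      = ∫⁻ t : ℝ, ENNReal.ofReal (f m t (glue (insert m A) y b)) *
          ENNReal.ofReal (∏ j ∈ S.erase m, f j
            (glue (insert m A) y b j) (glue (insert m A) y b)) :=
        lintegral_congr hpt
    _ = (∫⁻ t : ℝ, ENNReal.ofReal (f m t (glue (insert m A) y b))) *
          ENNReal.ofReal (∏ j ∈ S.erase m, f j
            (glue (insert m A) y b j) (glue (insert m A) y b)) :=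
        lintegral_mul_const' _ _ ENNReal.ofReal_ne_top
    _ = ENNReal.ofReal (∏ j ∈ S.erase m, f j
          (glue (insert m A) y b j) (glue (insert m A) y b)) := by
        rw [lint_f_one f hmeas hnonneg hnorm m _, one_mul]


lemma measurable_prod_glue (hmeas : ∀ j, Measurable (fun p : ℝ × (Fin q → ℝ) => f j p.1 p.2))
    (S A : Finset (Fin q)) (y : Fin q → ℝ) :
    Measurable fun w : {i : Fin q // i ∉ A} → ℝ =>
      ∏ j ∈ S, f j (glue A y w j) (glue A y w) := by
  apply Finset.measurable_prod
  intro j _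
  show Measurable fun w : {i : Fin q // i ∉ A} → ℝ => f j (glue A y w j) (glue A y w)
  have : Measurable fun w : {i : Fin q // i ∉ A} → ℝ =>
      ((glue A y w j, glue A y w) : ℝ × (Fin q → ℝ)) :=
    ((measurable_pi_apply j).comp (measurable_glue A y)).prodMk (measurable_glue A y)
  exact (hmeas j).comp this

lemma marg_eq (hmeas : ∀ j, Measurable (fun p : ℝ × (Fin q → ℝ) => f j p.1 p.2))
    (hnonneg : ∀ j t x, 0 ≤ f j t x) (A : Finset (Fin q)) (y : Fin q → ℝ) :
    margDensity q f A y = (J f Finset.univ A y).toReal := by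
  rw [margDensity]
  have hm : AEStronglyMeasurable (fun w : {i : Fin q // i ∉ A} → ℝ =>
      ∏ j : Fin q, f j ((fun i => if h : i ∈ A then y i else w ⟨i, h⟩) j)
        (fun i => if h : i ∈ A then y i else w ⟨i, h⟩)) volume :=
    (measurable_prod_glue f hmeas Finset.univ A y).aestronglyMeasurable
  have hnn : (0 : ({i : Fin q // i ∉ A} → ℝ) → ℝ) ≤ᵐ[volume] fun w =>
      ∏ j : Fin q, f j ((fun i => if h : i ∈ A then y i else w ⟨i, h⟩) j)
        (fun i => if h : i ∈ A then y i else w ⟨i, h⟩) :=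
    Filter.Eventually.of_forall fun w => Finset.prod_nonneg fun j _ => hnonneg j _ _
  rw [integral_eq_lintegral_of_nonneg_ae hnn hm]
  rfl

lemma factor_out (hnonneg : ∀ j t x, 0 ≤ f j t x)
    (hdep : ∀ j t x x', (∀ i ∈ pa j, x i = x' i) → f j t x = f j t x')
    (s : Fin q) {A : Finset (Fin q)} (y : Fin q → ℝ)
    (hsA : s ∈ A) (hpaA : pa s ⊆ A) :
    J f Finset.univ A y
      = ENNReal.ofReal (f s (y s) y) * J f (Finset.univ.erase s) A y := by
  unfold J
  rw [← lintegral_const_mul' _ _ ENNReal.ofReal_ne_top]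
  apply lintegral_congr
  intro w
  rw [← ENNReal.ofReal_mul (hnonneg s (y s) y)]
  congr 1
  rw [← Finset.mul_prod_erase Finset.univ _ (Finset.mem_univ s)]
  congr 1
  have h1 : glue A y w s = y s := by simp [glue, hsA]
  rw [h1]
  exact hdep s (y s) _ y (fun i hi => by simp [glue, hpaA hi])

lemma elim_chain (hmeas : ∀ j, Measurable (fun p : ℝ × (Fin q → ℝ) => f j p.1 p.2))
    (hnonneg : ∀ j t x, 0 ≤ f j t x)
    (hdep : ∀ j t x x', (∀ i ∈ pa j, x i = x' i) → f j t x = f j t x')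
    (hnorm : ∀ j x, ∫ t : ℝ, f j t x = 1)
    (horder : ∀ j : Fin q, ∀ i ∈ pa j, j < i)
    (S₀ B : Finset (Fin q)) (y : Fin q → ℝ) :
    ∀ k : ℕ, k ≤ q → (∀ m : Fin q, (m : ℕ) < k → m ∈ S₀ ∧ m ∉ B) →
    J f S₀ B y = J f (S₀.filter fun i => k ≤ (i : ℕ))
      (B ∪ Finset.univ.filter fun i => (i : ℕ) < k) y := by
  intro k
  induction k with
  | zero =>
    intro _ _
    apply J_congr
    · rw [Finset.filter_true_of_mem]; intro i _; exact Nat.zero_le _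
    · have h0 : (Finset.univ.filter fun i : Fin q => (i : ℕ) < 0) = ∅ := by
        apply Finset.filter_false_of_mem; intro i _; omega
      rw [h0, Finset.union_empty]
  | succ k ih =>
    intro hk hstep
    have hk' : k ≤ q := Nat.le_of_succ_le hk
    have hkq : k < q := hk
    set m : Fin q := ⟨k, hkq⟩ with hmdef
    have hmv : (m : ℕ) = k := rfl
    rw [ih hk' (fun m' hm' => hstep m' (Nat.lt_succ_of_lt hm'))]
    have hmA : m ∉ B ∪ Finset.univ.filter fun i : Fin q => (i : ℕ) < k := by
      simp only [Finset.mem_union, Finset.mem_filter, Finset.mem_univ, true_and, hmv]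
      push_neg
      exact ⟨(hstep m (by omega)).2, by omega⟩
    have hmS : m ∈ S₀.filter fun i : Fin q => k ≤ (i : ℕ) := by
      simp only [Finset.mem_filter, hmv]
      exact ⟨(hstep m (by omega)).1, le_refl k⟩
    have hm_pa : ∀ j ∈ S₀.filter fun i : Fin q => k ≤ (i : ℕ), m ∉ pa j := by
      intro j hj hmem
      have hlt : j < m := horder j m hmem
      have := (Finset.mem_filter.mp hj).2
      have : (j : ℕ) < k := by simpa [hmv] using (Fin.lt_iff_val_lt_val.mp hlt)
      omega
    rw [elim_step f pa hmeas hnonneg hdep hnorm hmA hmS hm_pa y]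
    apply J_congr
    · ext i
      simp only [Finset.mem_erase, Finset.mem_filter, Ne, Fin.ext_iff, hmv]
      constructor
      · rintro ⟨h1, h2, h3⟩; exact ⟨h2, by omega⟩
      · rintro ⟨h1, h2⟩; exact ⟨by omega, h1, by omega⟩
    · ext i
      simp only [Finset.mem_insert, Finset.mem_union, Finset.mem_filter, Finset.mem_univ,
        true_and, Fin.ext_iff, hmv]
      constructor
      · rintro (h | h | h)
        · exact Or.inr (by omega)
        · exact Or.inl h
        · exact Or.inr (by omega)
      · rintro (h | h)
        · exact Or.inr (Or.inl h)
        · by_cases he : (i : ℕ) = k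
          · exact Or.inl he
          · exact Or.inr (Or.inr (by omega))

end WithF
end BackdoorAux

open BackdoorAux in
/-- Back-door adjustment (Pearl, Thm 3.2.2): for a density factorizing along a DAG
with parent ordering, and an intervened node `s` with `one ∉ {s} ∪ pa s`, the
post-intervention marginal density of `X_one` under `do(X_s = x̃)` equals
`∫ f(x₁ | x_s = x̃, x_{pa(s)} = z) f(x_{pa(s)} = z) dz`, where the conditional and
marginal densities are the observational ones (the conditional being the ratio of
the `{one} ∪ {s} ∪ pa s`-marginal to the `{s} ∪ pa s`-marginal, assumed positive). -/
theorem stmt_16 (q : ℕ) (pa : Fin q → Finset (Fin q))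
    (horder : ∀ j : Fin q, ∀ i ∈ pa j, j < i)
    (f : Fin q → ℝ → (Fin q → ℝ) → ℝ)
    (hnonneg : ∀ j t x, 0 ≤ f j t x)
    (hmeas : ∀ j, Measurable (fun p : ℝ × (Fin q → ℝ) => f j p.1 p.2))
    (hdep : ∀ j t x x', (∀ i ∈ pa j, x i = x' i) → f j t x = f j t x')
    (hnorm : ∀ j x, ∫ t : ℝ, f j t x = 1)
    (one s : Fin q) (hs : s ≠ one) (hps : one ∉ pa s) (hss : s ∉ pa s)
    (xt : ℝ)
    -- regularity: Fubini applies (all marginal integrands are integrable) and the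
    -- conditioning marginal is everywhere positive
    (hint : ∀ (A : Finset (Fin q)) (y : Fin q → ℝ),
      Integrable (fun w : {i : Fin q // i ∉ A} → ℝ =>
        ∏ j : Fin q,
          f j ((fun i => if h : i ∈ A then y i else w ⟨i, h⟩) j)
            (fun i => if h : i ∈ A then y i else w ⟨i, h⟩)))
    (hpos : ∀ y : Fin q → ℝ, 0 < margDensity q f (insert s (pa s)) y) :
    ∀ x₁ : ℝ,
      (∫ w : {i : Fin q // i ≠ one ∧ i ≠ s} → ℝ,
          ∏ j ∈ Finset.univ.erase s,
            f j ((fun i => if h1 : i = one then x₁ else if h2 : i = s then xt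
                    else w ⟨i, ⟨h1, h2⟩⟩) j)
              (fun i => if h1 : i = one then x₁ else if h2 : i = s then xt
                    else w ⟨i, ⟨h1, h2⟩⟩))
        =
      ∫ z : {i : Fin q // i ∈ pa s} → ℝ,
        (margDensity q f (insert one (insert s (pa s)))
            (fun i => if i = one then x₁ else if i = s then xt
              else if h : i ∈ pa s then z ⟨i, h⟩ else 0)
          / margDensity q f (insert s (pa s))
              (fun i => if i = s then xt else if h : i ∈ pa s then z ⟨i, h⟩ else 0))
        * margDensity q f (pa s)
            (fun i => if h : i ∈ pa s then z ⟨i, h⟩ else 0) := by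
  intro x₁
  classical
  -- pointwise facts, for every z
  have hfact1 : ∀ z : {i : Fin q // i ∈ pa s} → ℝ, J f Finset.univ (insert s (pa s)) (fun i => if i = s then xt else if h : i ∈ pa s then z ⟨i, h⟩ else 0)
      = ENNReal.ofReal (f s xt (fun i => if h : i ∈ pa s then z ⟨i, h⟩ else 0)) * (BackdoorAux.J f (Finset.univ.erase s) (insert s (pa s)) (fun i => if i = s then xt else if h : i ∈ pa s then z ⟨i, h⟩ else 0)) := by
    intro z
    rw [factor_out f pa hnonneg hdep s (fun i => if i = s then xt else if h : i ∈ pa s then z ⟨i, h⟩ else 0)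
      (Finset.mem_insert_self s (pa s)) (fun i hi => Finset.mem_insert_of_mem hi)]
    congr 2
    rw [if_pos rfl]
    apply hdep
    intro i hi
    have his : i ≠ s := fun h => hss (h ▸ hi)
    simp [his, hi]
  have hfact2 : ∀ z : {i : Fin q // i ∈ pa s} → ℝ, J f Finset.univ (insert one (insert s (pa s))) (fun i => if i = one then x₁ else if i = s then xt else if h : i ∈ pa s then z ⟨i, h⟩ else 0)
      = ENNReal.ofReal (f s xt (fun i => if h : i ∈ pa s then z ⟨i, h⟩ else 0)) * (BackdoorAux.J f (Finset.univ.erase s) (insert one (insert s (pa s))) (fun i => if i = one then x₁ else if i = s then xt else if h : i ∈ pa s then z ⟨i, h⟩ else 0)) := by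
    intro z
    rw [factor_out f pa hnonneg hdep s (fun i => if i = one then x₁ else if i = s then xt else if h : i ∈ pa s then z ⟨i, h⟩ else 0)
      (Finset.mem_insert_of_mem (Finset.mem_insert_self s (pa s)))
      (fun i hi => Finset.mem_insert_of_mem (Finset.mem_insert_of_mem hi))]
    congr 2
    rw [if_neg hs, if_pos rfl]
    apply hdep
    intro i hi
    have his : i ≠ s := fun h => hss (h ▸ hi)
    have hio : i ≠ one := fun h => hps (h ▸ hi)
    simp [his, hio, hi]
  have hM1 : ∀ z : {i : Fin q // i ∈ pa s} → ℝ, margDensity q f (insert s (pa s)) (fun i => if i = s then xt else if h : i ∈ pa s then z ⟨i, h⟩ else 0) = (f s xt (fun i => if h : i ∈ pa s then z ⟨i, h⟩ else 0)) * ((BackdoorAux.J f (Finset.univ.erase s) (insert s (pa s)) (fun i => if i = s then xt else if h : i ∈ pa s then z ⟨i, h⟩ else 0))).toReal := by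
    intro z
    rw [marg_eq f hmeas hnonneg, hfact1 z, ENNReal.toReal_mul,
      ENNReal.toReal_ofReal (hnonneg s xt (fun i => if h : i ∈ pa s then z ⟨i, h⟩ else 0))]
  have hM2 : ∀ z : {i : Fin q // i ∈ pa s} → ℝ, margDensity q f (insert one (insert s (pa s))) (fun i => if i = one then x₁ else if i = s then xt else if h : i ∈ pa s then z ⟨i, h⟩ else 0) = (f s xt (fun i => if h : i ∈ pa s then z ⟨i, h⟩ else 0)) * ((BackdoorAux.J f (Finset.univ.erase s) (insert one (insert s (pa s))) (fun i => if i = one then x₁ else if i = s then xt else if h : i ∈ pa s then z ⟨i, h⟩ else 0))).toReal := by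
    intro z
    rw [marg_eq f hmeas hnonneg, hfact2 z, ENNReal.toReal_mul,
      ENNReal.toReal_ofReal (hnonneg s xt (fun i => if h : i ∈ pa s then z ⟨i, h⟩ else 0))]
  -- the elimination chains: the pa s marginal equals H z
  have hchain : ∀ z : {i : Fin q // i ∈ pa s} → ℝ, J f Finset.univ (pa s) (fun i => if h : i ∈ pa s then z ⟨i, h⟩ else 0) = (BackdoorAux.J f (Finset.univ.erase s) (insert s (pa s)) (fun i => if i = s then xt else if h : i ∈ pa s then z ⟨i, h⟩ else 0)) := by
    intro z
    have c1 := elim_chain f pa hmeas hnonneg hdep hnorm horder Finset.univ (pa s) (fun i => if h : i ∈ pa s then z ⟨i, h⟩ else 0)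
      ((s : ℕ) + 1) (by have := s.isLt; omega)
      (fun m hm => ⟨Finset.mem_univ m, fun hmem => by
        have := horder s m hmem
        have : (s : ℕ) < (m : ℕ) := this
        omega⟩)
    have c2 := elim_chain f pa hmeas hnonneg hdep hnorm horder (Finset.univ.erase s)
      (insert s (pa s)) (fun i => if i = s then xt else if h : i ∈ pa s then z ⟨i, h⟩ else 0) (s : ℕ) (by have := s.isLt; omega)
      (fun m hm => by
        have hne : m ≠ s := fun h => by rw [h] at hm; omega
        refine ⟨Finset.mem_erase.mpr ⟨hne, Finset.mem_univ m⟩, fun hmem => ?_⟩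
        rcases Finset.mem_insert.mp hmem with h | h
        · exact hne h
        · have := horder s m h
          have : (s : ℕ) < (m : ℕ) := this
          omega)
    rw [c1, c2]
    have hSeq : ((Finset.univ.erase s).filter fun i : Fin q => (s : ℕ) ≤ (i : ℕ))
        = Finset.univ.filter fun i : Fin q => (s : ℕ) + 1 ≤ (i : ℕ) := by
      ext i
      simp only [Finset.mem_filter, Finset.mem_erase, Finset.mem_univ, true_and, and_true,
        Ne, Fin.ext_iff]
      omega
    have hAeq : (insert s (pa s)) ∪ (Finset.univ.filter fun i : Fin q => (i : ℕ) < (s : ℕ))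
        = pa s ∪ (Finset.univ.filter fun i : Fin q => (i : ℕ) < (s : ℕ) + 1) := by
      ext i
      simp only [Finset.mem_union, Finset.mem_insert, Finset.mem_filter, Finset.mem_univ,
        true_and, Fin.ext_iff]
      constructor
      · rintro ((h | h) | h)
        · exact Or.inr (by omega)
        · exact Or.inl h
        · exact Or.inr (by omega)
      · rintro (h | h)
        · exact Or.inl (Or.inr h)
        · by_cases he : (i : ℕ) = (s : ℕ)
          · exact Or.inl (Or.inl he)
          · exact Or.inr (by omega)
    rw [J_congr f hSeq hAeq (fun i => if i = s then xt else if h : i ∈ pa s then z ⟨i, h⟩ else 0)]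
    apply J_congr_y f pa hdep
    · intro j hj _
      have hjv : (s : ℕ) + 1 ≤ (j : ℕ) := (Finset.mem_filter.mp hj).2
      have hjs : j ≠ s := fun h => by rw [h] at hjv; omega
      simp [hjs]
    · intro j hj i hi _
      have hjv : (s : ℕ) + 1 ≤ (j : ℕ) := (Finset.mem_filter.mp hj).2
      have hji := horder j i hi
      have hji' : (j : ℕ) < (i : ℕ) := hji
      have his : i ≠ s := fun h => by rw [h] at hji'; omega
      simp [his]
  -- positivity facts from hpos
  have hposz : ∀ z : {i : Fin q // i ∈ pa s} → ℝ, 0 < (f s xt (fun i => if h : i ∈ pa s then z ⟨i, h⟩ else 0)) ∧ 0 < ((BackdoorAux.J f (Finset.univ.erase s) (insert s (pa s)) (fun i => if i = s then xt else if h : i ∈ pa s then z ⟨i, h⟩ else 0))).toReal ∧ (BackdoorAux.J f (Finset.univ.erase s) (insert s (pa s)) (fun i => if i = s then xt else if h : i ∈ pa s then z ⟨i, h⟩ else 0)) ≠ 0 ∧ (BackdoorAux.J f (Finset.univ.erase s) (insert s (pa s)) (fun i => if i = s then xt else if h : i ∈ pa s then z ⟨i, h⟩ else 0)) ≠ ⊤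 := by
    intro z
    have hp := hpos (fun i => if i = s then xt else if h : i ∈ pa s then z ⟨i, h⟩ else 0)
    rw [hM1 z] at hp
    have hCnn := hnonneg s xt (fun i => if h : i ∈ pa s then z ⟨i, h⟩ else 0)
    have hc : 0 < (f s xt (fun i => if h : i ∈ pa s then z ⟨i, h⟩ else 0)) := lt_of_le_of_ne hCnn (fun h => by
      rw [← h, zero_mul] at hp; exact lt_irrefl 0 hp)
    have hH : 0 < ((BackdoorAux.J f (Finset.univ.erase s) (insert s (pa s)) (fun i => if i = s then xt else if h : i ∈ pa s then z ⟨i, h⟩ else 0))).toReal := by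
      by_contra h
      push_neg at h
      nlinarith
    have := ENNReal.toReal_pos_iff.mp hH
    exact ⟨hc, hH, this.1.ne', this.2.ne⟩
  -- G z is finite, from hint
  have hGfin : ∀ z : {i : Fin q // i ∈ pa s} → ℝ, (BackdoorAux.J f (Finset.univ.erase s) (insert one (insert s (pa s))) (fun i => if i = one then x₁ else if i = s then xt else if h : i ∈ pa s then z ⟨i, h⟩ else 0)) ≠ ⊤ := by
    intro z
    have hlt : J f Finset.univ (insert one (insert s (pa s))) (fun i => if i = one then x₁ else if i = s then xt else if h : i ∈ pa s then z ⟨i, h⟩ else 0) < ⊤ :=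
      (hint (insert one (insert s (pa s))) (fun i => if i = one then x₁ else if i = s then xt else if h : i ∈ pa s then z ⟨i, h⟩ else 0)).lintegral_lt_top
    rw [hfact2 z] at hlt
    intro h
    rw [h, ENNReal.mul_top (ENNReal.ofReal_pos.mpr (hposz z).1).ne'] at hlt
    exact lt_irrefl _ hlt
  -- pointwise identification of the RHS integrand
  have hptwise : ∀ z : {i : Fin q // i ∈ pa s} → ℝ,
      (margDensity q f (insert one (insert s (pa s))) (fun i => if i = one then x₁ else if i = s then xt else if h : i ∈ pa s then z ⟨i, h⟩ else 0) / margDensity q f (insert s (pa s)) (fun i => if i = s then xt else if h : i ∈ pa s then z ⟨i, h⟩ else 0)) * margDensity q f (pa s) (fun i => if h : i ∈ pa s then z ⟨i, h⟩ else 0)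
        = ((BackdoorAux.J f (Finset.univ.erase s) (insert one (insert s (pa s))) (fun i => if i = one then x₁ else if i = s then xt else if h : i ∈ pa s then z ⟨i, h⟩ else 0))).toReal := by
    intro z
    obtain ⟨hc, hH, _, _⟩ := hposz z
    rw [hM1 z, hM2 z, marg_eq f hmeas hnonneg (pa s) (fun i => if h : i ∈ pa s then z ⟨i, h⟩ else 0), hchain z,
      mul_div_mul_left _ _ (ne_of_gt hc)]
    exact div_mul_cancel₀ _ (ne_of_gt hH)
  -- measurability of z ↦ G z
  have hF2 : Measurable (fun v : Fin q → ℝ =>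
      ENNReal.ofReal (∏ j ∈ Finset.univ.erase s, f j (v j) v)) :=
    measurable_F f hmeas (Finset.univ.erase s)
  have hGmeas : Measurable fun z : {i : Fin q // i ∈ pa s} → ℝ => (BackdoorAux.J f (Finset.univ.erase s) (insert one (insert s (pa s))) (fun i => if i = one then x₁ else if i = s then xt else if h : i ∈ pa s then z ⟨i, h⟩ else 0)) := by
    unfold J
    have hjoint : Measurable fun p : ({i : Fin q // i ∈ pa s} → ℝ) ×
        ({i : Fin q // i ∉ insert one (insert s (pa s))} → ℝ) =>
        ENNReal.ofReal (∏ j ∈ Finset.univ.erase s,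
          f j (glue (insert one (insert s (pa s)))
              (fun i => if i = one then x₁ else if i = s then xt
                else if h : i ∈ pa s then p.1 ⟨i, h⟩ else 0) p.2 j)
            (glue (insert one (insert s (pa s)))
              (fun i => if i = one then x₁ else if i = s then xt
                else if h : i ∈ pa s then p.1 ⟨i, h⟩ else 0) p.2)) := by
      apply hF2.comp
      apply measurable_pi_lambda
      intro i
      by_cases hiA : i ∈ (insert one (insert s (pa s)))
      · by_cases hione : i = one
        · simp [glue, hiA, hione]
        · by_cases his : i = s
          · simp [glue, hiA, hione, his]
          · have hipa : i ∈ pa s := by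
              rcases Finset.mem_insert.mp hiA with h | h
              · exact absurd h hione
              rcases Finset.mem_insert.mp h with h' | h'
              · exact absurd h' his
              · exact h'
            simp only [glue, dif_pos hiA, if_neg hione, if_neg his, dif_pos hipa]
            exact (measurable_pi_apply _).comp measurable_fst
      · simp only [glue, dif_neg hiA]
        exact (measurable_pi_apply _).comp measurable_snd
    exact hjoint.lintegral_prod_right'
  -- the LHS as a lintegral over z
  have hVmeas : Measurable (fun w : {i : Fin q // i ≠ one ∧ i ≠ s} → ℝ =>
      (fun i => if h1 : i = one then x₁ else if h2 : i = s then xt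
        else w ⟨i, ⟨h1, h2⟩⟩ : Fin q → ℝ)) := by
    apply measurable_pi_lambda
    intro i
    by_cases h1 : i = one
    · simp only [dif_pos h1]; exact measurable_const
    · by_cases h2 : i = s
      · simp only [dif_neg h1, dif_pos h2]; exact measurable_const
      · simp only [dif_neg h1, dif_neg h2]
        exact measurable_pi_apply _
  have step1 : (∫ w : {i : Fin q // i ≠ one ∧ i ≠ s} → ℝ,
      ∏ j ∈ Finset.univ.erase s,
        f j ((fun i => if h1 : i = one then x₁ else if h2 : i = s then xt
                else w ⟨i, ⟨h1, h2⟩⟩) j)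
          (fun i => if h1 : i = one then x₁ else if h2 : i = s then xt
                else w ⟨i, ⟨h1, h2⟩⟩))
      = (∫⁻ w : {i : Fin q // i ≠ one ∧ i ≠ s} → ℝ,
          ENNReal.ofReal (∏ j ∈ Finset.univ.erase s,
            f j ((fun i => if h1 : i = one then x₁ else if h2 : i = s then xt
                    else w ⟨i, ⟨h1, h2⟩⟩) j)
              (fun i => if h1 : i = one then x₁ else if h2 : i = s then xt
                    else w ⟨i, ⟨h1, h2⟩⟩))).toReal := by
    apply integral_eq_lintegral_of_nonneg_ae
    · exact Filter.Eventually.of_forall fun w => Finset.prod_nonneg fun j _ => hnonneg j _ _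
    · exact ((measurable_Freal f hmeas (Finset.univ.erase s)).comp hVmeas).aestronglyMeasurable
  -- reindex to the Finset complement subtype
  have hiff : ∀ i : Fin q, (i ∉ ({one, s} : Finset (Fin q))) ↔ (i ≠ one ∧ i ≠ s) := by
    intro i
    simp [Finset.mem_insert, Finset.mem_singleton, not_or]
  let e : {i : Fin q // i ∉ ({one, s} : Finset (Fin q))} ≃ {i : Fin q // i ≠ one ∧ i ≠ s} :=
    { toFun := fun t => ⟨(t : Fin q), (hiff _).mp t.2⟩
      invFun := fun t => ⟨(t : Fin q), (hiff _).mpr t.2⟩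
      left_inv := fun t => by ext; rfl
      right_inv := fun t => by ext; rfl }
  have step2 : ∫⁻ w : {i : Fin q // i ≠ one ∧ i ≠ s} → ℝ,
      ENNReal.ofReal (∏ j ∈ Finset.univ.erase s,
        f j ((fun i => if h1 : i = one then x₁ else if h2 : i = s then xt
                else w ⟨i, ⟨h1, h2⟩⟩) j)
          (fun i => if h1 : i = one then x₁ else if h2 : i = s then xt
                else w ⟨i, ⟨h1, h2⟩⟩))
      = ∫⁻ w : {i : Fin q // i ∉ ({one, s} : Finset (Fin q))} → ℝ,
          (fun v : Fin q → ℝ => ENNReal.ofReal (∏ j ∈ Finset.univ.erase s, f j (v j) v))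
            (glue ({one, s} : Finset (Fin q)) (fun i => if i = one then x₁ else if i = s then xt else 0) w) := by
    rw [← lintegral_reindex e (fun w => (fun v : Fin q → ℝ =>
      ENNReal.ofReal (∏ j ∈ Finset.univ.erase s, f j (v j) v))
        (glue ({one, s} : Finset (Fin q)) (fun i => if i = one then x₁ else if i = s then xt else 0) w))
      (hF2.comp (measurable_glue _ _))]
    apply lintegral_congr
    intro v
    have hv : (fun i => if h1 : i = one then x₁ else if h2 : i = s then xt
          else v ⟨i, ⟨h1, h2⟩⟩ : Fin q → ℝ)
        = glue ({one, s} : Finset (Fin q))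
            (fun i => if i = one then x₁ else if i = s then xt else 0)
            (fun i => v (e i)) := by
      funext i
      unfold glue
      by_cases h1 : i = one
      · have hm : i ∈ ({one, s} : Finset (Fin q)) := by simp [h1]
        simp [h1, hm]
      · by_cases h2 : i = s
        · have hm : i ∈ ({one, s} : Finset (Fin q)) := by simp [h2]
          simp [h1, h2, hm]
        · have hm : i ∉ ({one, s} : Finset (Fin q)) := by simp [h1, h2]
          rw [dif_neg h1, dif_neg h2, dif_neg hm]
          exact congrArg v (Subtype.ext rfl)
    rw [hv]
  -- split off the pa s coordinates
  have step3 := split ({one, s} : Finset (Fin q)) (pa s) (insert one (insert s (pa s)))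
    (fun i hi => by
      simp only [Finset.mem_insert, Finset.mem_singleton, not_or]
      exact ⟨fun h => hps (h ▸ hi), fun h => hss (h ▸ hi)⟩)
    (by
      ext i
      simp only [Finset.mem_insert, Finset.mem_singleton, Finset.mem_union, or_assoc])
    (fun v : Fin q → ℝ => ENNReal.ofReal (∏ j ∈ Finset.univ.erase s, f j (v j) v))
    hF2 (fun i => if i = one then x₁ else if i = s then xt else 0)
  have step4 : ∀ z : {i : Fin q // i ∈ pa s} → ℝ,
      (fun i => if h : i ∈ pa s then z ⟨i, h⟩
        else if i = one then x₁ else if i = s then xt else 0 : Fin q → ℝ)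
      = (fun i => if i = one then x₁ else if i = s then xt
          else if h : i ∈ pa s then z ⟨i, h⟩ else 0) := by
    intro z
    funext i
    by_cases hpa : i ∈ pa s
    · have h1 : i ≠ one := fun h => hps (h ▸ hpa)
      have h2 : i ≠ s := fun h => hss (h ▸ hpa)
      simp [hpa, h1, h2]
    · simp [hpa]
  have hfinal : (∫ w : {i : Fin q // i ≠ one ∧ i ≠ s} → ℝ,
      ∏ j ∈ Finset.univ.erase s,
        f j ((fun i => if h1 : i = one then x₁ else if h2 : i = s then xt
                else w ⟨i, ⟨h1, h2⟩⟩) j)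
          (fun i => if h1 : i = one then x₁ else if h2 : i = s then xt
                else w ⟨i, ⟨h1, h2⟩⟩))
      = (∫⁻ z : {i : Fin q // i ∈ pa s} → ℝ,
          BackdoorAux.J f (Finset.univ.erase s) (insert one (insert s (pa s)))
            (fun i => if i = one then x₁ else if i = s then xt
              else if h : i ∈ pa s then z ⟨i, h⟩ else 0)).toReal := by
    rw [step1, step2, step3]
    congr 1
    apply lintegral_congr
    intro z
    rw [J]
    apply lintegral_congr
    intro b
    congr 1
    rw [step4 z]
  rw [hfinal]
  rw [← integral_toReal hGmeas.aemeasurable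
    (Filter.Eventually.of_forall fun z => lt_top_iff_ne_top.mpr (hGfin z))]
  apply integral_congr_ae
  exact Filter.Eventually.of_forall fun z => (hptwise z).symm
end
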